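/- arXiv:2301.03295 — 4 statements merged into one kernel-verified Lean document; each statement's English description precedes it below -/
import Mathlib

section
/- In quadratic regression with standard normal covariate, for every α ∈ (0,1) the two-interval design ξ' with density φ(x)𝟙_{|x| ≥ a}, a = z_{1−α/2}, satisfies ψ(0, ξ') > ψ(a, ξ'), where ψ is the sensitivity function formed from the moments m₂(ξ'), m₄(ξ') as ψ(x) = α(m₄ − 3m₂x² + α(m₄/m₂)x² + αx⁴)/(αm₄ − m₂²). Equivalently, c(α) = αa²(2m₂/(αm₄ − m₂²) − a²α/(αm₄ − m₂²) − 1/m₂) > 0 for all α ∈ (0,1). -/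
/-!
With `b = √(2/π) a e^{-a²/2} = 2aφ(a)`, the Mills-ratio bounds
`a/(a²+1) φ(a) ≤ 1 - Φ(a) ≤ φ(a)/a` together with `1 - Φ(a) = α/2` give
`αa² ≤ b ≤ α(a²+1)`. Since `m₂ = α + b` and `m₄ = 3m₂ + a²b`, the upper bound on `b` gives
`αm₄ - m₂² ≥ 2α² > 0`, and the lower bound `αa² ≤ b` shows that the numerator of `c(α)` over the common
denominator, `m₂(2m₂ - a²α) - (αm₄ - m₂²)`, is at least `2αb + b² > 0`.
-/

open MeasureTheory Set Real Filter Topology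

lemma integrable_exp_neg_sq_div_two : Integrable (fun x : ℝ => exp (-x ^ 2 / 2)) := by
  simpa [neg_div, div_eq_inv_mul] using integrable_exp_neg_mul_sq (b := 1 / 2) (by norm_num)

lemma integrable_mul_exp_neg_sq_div_two : Integrable (fun x : ℝ => x * exp (-x ^ 2 / 2)) := by
  simpa [neg_div, div_eq_inv_mul] using integrable_mul_exp_neg_mul_sq (b := 1 / 2) (by norm_num)

lemma hasDerivAt_exp_neg_sq_div_two (x : ℝ) :
    HasDerivAt (fun x => exp (-x ^ 2 / 2)) (-x * exp (-x ^ 2 / 2)) x := by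
  have h : HasDerivAt (fun x : ℝ => -x ^ 2 / 2) (-x) x :=
    ((hasDerivAt_pow 2 x).neg.div_const 2).congr_deriv (by ring)
  simpa [mul_comm] using h.exp

lemma tendsto_exp_neg_sq_div_two_atTop :
    Tendsto (fun x : ℝ => exp (-x ^ 2 / 2)) atTop (𝓝 0) :=
  tendsto_exp_atBot.comp <|
    (tendsto_neg_atTop_atBot.comp (tendsto_pow_atTop two_ne_zero)).atBot_div_const two_pos

lemma integral_Ioi_mul_exp_neg_sq_div_two (a : ℝ) :
    ∫ x in Ioi a, x * exp (-x ^ 2 / 2) = exp (-a ^ 2 / 2) := by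
  have hderiv (x : ℝ) : HasDerivAt (fun x => -exp (-x ^ 2 / 2)) (x * exp (-x ^ 2 / 2)) x :=
    (hasDerivAt_exp_neg_sq_div_two x).neg.congr_deriv (by ring)
  rw [integral_Ioi_of_hasDerivAt_of_tendsto' (fun x _ => hderiv x)
    integrable_mul_exp_neg_sq_div_two.integrableOn
    (by simpa using tendsto_exp_neg_sq_div_two_atTop.neg)]
  ring

lemma mul_integral_Ioi_exp_neg_sq_div_two_le (a : ℝ) :
    a * ∫ x in Ioi a, exp (-x ^ 2 / 2) ≤ exp (-a ^ 2 / 2) := by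
  rw [← integral_Ioi_mul_exp_neg_sq_div_two, ← integral_const_mul]
  refine setIntegral_mono_on (integrable_exp_neg_sq_div_two.const_mul a).integrableOn
    integrable_mul_exp_neg_sq_div_two.integrableOn measurableSet_Ioi fun x hx => ?_
  exact mul_le_mul_of_nonneg_right (le_of_lt hx) (exp_pos _).le

lemma hasDerivAt_neg_div_sq_add_one_mul_exp_neg_sq_div_two (x : ℝ) :
    HasDerivAt (fun x => -(x / (x ^ 2 + 1) * exp (-x ^ 2 / 2)))
      (exp (-x ^ 2 / 2) * (1 - 2 / (x ^ 2 + 1) ^ 2)) x := by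
  have hquot : HasDerivAt (fun x : ℝ => x / (x ^ 2 + 1))
      ((1 * (x ^ 2 + 1) - x * (2 * x)) / (x ^ 2 + 1) ^ 2) x := by
    simpa using (hasDerivAt_id x).fun_div ((hasDerivAt_pow 2 x).add_const 1) (by positivity)
  refine (hquot.mul (hasDerivAt_exp_neg_sq_div_two x)).neg.congr_deriv ?_
  field_simp
  ring

lemma norm_exp_neg_sq_div_two_mul_one_sub_le (x : ℝ) :
    ‖exp (-x ^ 2 / 2) * (1 - 2 / (x ^ 2 + 1) ^ 2)‖ ≤ exp (-x ^ 2 / 2) := by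
  have h : 2 / (x ^ 2 + 1) ^ 2 ≤ 2 := div_le_self zero_le_two (one_le_pow₀ (by nlinarith))
  rw [norm_mul, norm_of_nonneg (exp_pos _).le]
  refine mul_le_of_le_one_right (exp_pos _).le ?_
  rw [norm_eq_abs, abs_le]
  constructor <;> nlinarith [div_nonneg zero_le_two (sq_nonneg (x ^ 2 + 1))]

lemma tendsto_div_sq_add_one_mul_exp_neg_sq_div_two_atTop :
    Tendsto (fun x : ℝ => x / (x ^ 2 + 1) * exp (-x ^ 2 / 2)) atTop (𝓝 0) := by
  refine squeeze_zero_norm (fun x => ?_) tendsto_exp_neg_sq_div_two_atTop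
  rw [norm_mul, norm_of_nonneg (exp_pos _).le]
  refine mul_le_of_le_one_left (exp_pos _).le ?_
  rw [norm_div, norm_eq_abs, norm_of_nonneg (by positivity), div_le_one (by positivity)]
  nlinarith [sq_abs x, sq_nonneg (|x| - 1)]

lemma integrable_exp_neg_sq_div_two_mul_one_sub :
    Integrable (fun x : ℝ => exp (-x ^ 2 / 2) * (1 - 2 / (x ^ 2 + 1) ^ 2)) :=
  integrable_exp_neg_sq_div_two.mono' (by fun_prop)
    (.of_forall norm_exp_neg_sq_div_two_mul_one_sub_le)

lemma integral_Ioi_exp_neg_sq_div_two_mul_one_sub (a : ℝ) :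
    ∫ x in Ioi a, exp (-x ^ 2 / 2) * (1 - 2 / (x ^ 2 + 1) ^ 2)
      = a / (a ^ 2 + 1) * exp (-a ^ 2 / 2) := by
  rw [integral_Ioi_of_hasDerivAt_of_tendsto'
    (fun x _ => hasDerivAt_neg_div_sq_add_one_mul_exp_neg_sq_div_two x)
    integrable_exp_neg_sq_div_two_mul_one_sub.integrableOn
    (by simpa using tendsto_div_sq_add_one_mul_exp_neg_sq_div_two_atTop.neg)]
  ring

lemma mul_exp_neg_sq_div_two_le_mul_integral_Ioi (a : ℝ) :
    a * exp (-a ^ 2 / 2) ≤ (a ^ 2 + 1) * ∫ x in Ioi a, exp (-x ^ 2 / 2) := by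
  have hle : a / (a ^ 2 + 1) * exp (-a ^ 2 / 2) ≤ ∫ x in Ioi a, exp (-x ^ 2 / 2) := by
    rw [← integral_Ioi_exp_neg_sq_div_two_mul_one_sub]
    refine setIntegral_mono_on integrable_exp_neg_sq_div_two_mul_one_sub.integrableOn
      integrable_exp_neg_sq_div_two.integrableOn measurableSet_Ioi fun x _ => ?_
    exact mul_le_of_le_one_right (exp_pos _).le (sub_le_self _ (by positivity))
  calc a * exp (-a ^ 2 / 2) = (a ^ 2 + 1) * (a / (a ^ 2 + 1) * exp (-a ^ 2 / 2)) := by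
        field_simp
    _ ≤ (a ^ 2 + 1) * ∫ x in Ioi a, exp (-x ^ 2 / 2) := by gcongr

lemma sqrt_two_div_pi_mul_sqrt_two_mul_pi : √(2 / π) * √(2 * π) = 2 := by
  rw [← sqrt_mul (by positivity), show 2 / π * (2 * π) = 2 ^ 2 by field_simp,
    sqrt_sq zero_le_two]

lemma sensitivity_gap_pos {α a b m₂ m₄ : ℝ} (hα : 0 < α) (ha : 0 < a)
    (hupper : α * a ^ 2 ≤ b) (hlower : b ≤ α * (a ^ 2 + 1))
    (hm₂ : m₂ = α + b) (hm₄ : m₄ = 3 * m₂ + a ^ 2 * b) :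
    0 < α * a ^ 2 * (2 * m₂ / (α * m₄ - m₂ ^ 2) - a ^ 2 * α / (α * m₄ - m₂ ^ 2) - 1 / m₂) := by
  have hb : 0 < b := lt_of_lt_of_le (by positivity) hupper
  have hm₂pos : 0 < m₂ := by rw [hm₂]; positivity
  have hdet : 0 < α * m₄ - m₂ ^ 2 := by
    rw [hm₄, hm₂]; nlinarith
  have hnum : 0 < m₂ * (2 * m₂ - a ^ 2 * α) - (α * m₄ - m₂ ^ 2) := by
    rw [hm₄, hm₂]; nlinarith
  have key : 2 * m₂ / (α * m₄ - m₂ ^ 2) - a ^ 2 * α / (α * m₄ - m₂ ^ 2) - 1 / m₂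
      = (m₂ * (2 * m₂ - a ^ 2 * α) - (α * m₄ - m₂ ^ 2)) / ((α * m₄ - m₂ ^ 2) * m₂) := by
    field_simp
  rw [key]
  positivity

/-- Quadratic regression with standard normal covariate: for every `α ∈ (0,1)`,
the two-interval design `ξ'` with density `φ(x)𝟙_{|x| ≥ a}`, `a = z_{1−α/2}`,
satisfies `ψ(0, ξ') > ψ(a, ξ')`; equivalently
`c(α) = αa²(2m₂/(αm₄ − m₂²) − a²α/(αm₄ − m₂²) − 1/m₂) > 0`,
where `m₂ = α + √(2/π) a e^{−a²/2}` and `m₄ = 3m₂ + √(2/π) a³ e^{−a²/2}`.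
Hence the `D`-optimal design must be supported on three proper intervals. -/
theorem stmt12 (α : ℝ) (hα : α ∈ Set.Ioo (0 : ℝ) 1) (a : ℝ) (ha : 0 < a)
    (hquant : (∫ x in Set.Ici a, Real.sqrt (2 * Real.pi) ⁻¹ * Real.exp (-x ^ 2 / 2)) = α / 2)
    (m₂ m₄ : ℝ)
    (hm₂ : m₂ = α + Real.sqrt (2 / Real.pi) * a * Real.exp (-a ^ 2 / 2))
    (hm₄ : m₄ = 3 * m₂ + Real.sqrt (2 / Real.pi) * a ^ 3 * Real.exp (-a ^ 2 / 2)) :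
    0 < α * a ^ 2 * (2 * m₂ / (α * m₄ - m₂ ^ 2) - a ^ 2 * α / (α * m₄ - m₂ ^ 2) - 1 / m₂) := by
  set I := ∫ x in Ioi a, exp (-x ^ 2 / 2)
  have hα_eq : α = √(2 / π) * I := by
    -- `Real.sqrt (2 * Real.pi) ⁻¹` in `hquant` parses as `√((2 * π)⁻¹)`.
    rw [integral_Ici_eq_integral_Ioi, integral_const_mul] at hquant
    calc α = √(2 / π) * √(2 * π) * (√((2 * π)⁻¹) * I) := by
          rw [hquant, sqrt_two_div_pi_mul_sqrt_two_mul_pi]; ring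
      _ = √(2 / π) * I := by rw [sqrt_inv, mul_assoc, mul_inv_cancel_left₀ (by positivity)]
  have hupper : α * a ^ 2 ≤ √(2 / π) * a * exp (-a ^ 2 / 2) :=
    calc α * a ^ 2 = √(2 / π) * a * (a * I) := by rw [hα_eq]; ring
      _ ≤ √(2 / π) * a * exp (-a ^ 2 / 2) := by
        gcongr; exact mul_integral_Ioi_exp_neg_sq_div_two_le a
  have hlower : √(2 / π) * a * exp (-a ^ 2 / 2) ≤ α * (a ^ 2 + 1) :=
    calc √(2 / π) * a * exp (-a ^ 2 / 2) = √(2 / π) * (a * exp (-a ^ 2 / 2)) := by ring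
      _ ≤ √(2 / π) * ((a ^ 2 + 1) * I) :=
        mul_le_mul_of_nonneg_left (mul_exp_neg_sq_div_two_le_mul_integral_Ioi a) (sqrt_nonneg _)
      _ = α * (a ^ 2 + 1) := by rw [hα_eq]; ring
  exact sensitivity_gap_pos hα.1 ha hupper hlower hm₂ (by rw [hm₄]; ring)
end

section
/- Define u(α) = 45 − 15α + 15α² − 45α³ + 20α⁴ − 4√5·√(45α² − 90α³ + 90α⁴ − 75α⁵ + 57α⁶ − 27α⁷ + 5α⁸), v(α) = 180(1 − α), and b(α) = √(u(α)/v(α)) − (1 − α)/2 for α ∈ (0,1). Then b extends continuously to b(0) = 0 and lim_{α → 0⁺} b(α)/α = 1/3. -/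
set_option maxHeartbeats 800000


open Filter Real Topology

/-- For the explicit boundary point `b(α) = √(u(α)/v(α)) − (1 − α)/2` of the
`D`-optimal subsampling design for quadratic regression with uniform covariate,
`b` extends continuously to `b(0) = 0` and `b(α)/α → 1/3` as `α → 0⁺`. -/
theorem stmt14
    (u v b : ℝ → ℝ)
    (hu : ∀ α : ℝ, u α = 45 - 15 * α + 15 * α ^ 2 - 45 * α ^ 3 + 20 * α ^ 4 -
      4 * Real.sqrt 5 * Real.sqrt (45 * α ^ 2 - 90 * α ^ 3 + 90 * α ^ 4 - 75 * α ^ 5 +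
        57 * α ^ 6 - 27 * α ^ 7 + 5 * α ^ 8))
    (hv : ∀ α : ℝ, v α = 180 * (1 - α))
    (hb : ∀ α : ℝ, b α = Real.sqrt (u α / v α) - (1 - α) / 2) :
    Filter.Tendsto b (nhdsWithin 0 (Set.Ioi 0)) (nhds 0) ∧
    Filter.Tendsto (fun α => b α / α) (nhdsWithin 0 (Set.Ioi 0)) (nhds (1 / 3)) := by
  have s5 : Real.sqrt 5 * Real.sqrt 45 = 15 := by
    rw [← Real.sqrt_mul (by norm_num) 45,
      show (5:ℝ) * 45 = 15 ^ 2 by norm_num, Real.sqrt_sq (by norm_num)]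
  set g : ℝ → ℝ := fun α => Real.sqrt (45 - 90*α + 90*α^2 - 75*α^3 + 57*α^4 - 27*α^5 + 5*α^6)
    with hgdef
  have hg_cont : Continuous g := Real.continuous_sqrt.comp (by continuity)
  have hg0 : g 0 = Real.sqrt 45 := by simp [hgdef]
  set U : ℝ → ℝ := fun α => 45 - 15*α + 15*α^2 - 45*α^3 + 20*α^4 - 4*Real.sqrt 5 * (α * g α)
    with hUdef
  have hU_cont : Continuous U := by fun_prop
  have hU0 : U 0 = 45 := by simp [hUdef]
  have huU : ∀ α : ℝ, 0 ≤ α → u α = U α := by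
    intro α hα
    rw [hu, hUdef]
    rw [show (45 * α ^ 2 - 90 * α ^ 3 + 90 * α ^ 4 - 75 * α ^ 5 +
        57 * α ^ 6 - 27 * α ^ 7 + 5 * α ^ 8)
        = α^2 * (45 - 90*α + 90*α^2 - 75*α^3 + 57*α^4 - 27*α^5 + 5*α^6) from by ring,
      Real.sqrt_mul (sq_nonneg α), Real.sqrt_sq hα]
  set F : ℝ → ℝ := fun α => (120 - 120*α + 20*α^3 - 4*Real.sqrt 5 * g α) /
      (180*(1-α) * (Real.sqrt (U α / (180*(1-α))) + (1-α)/2)) with hFdef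
  have hhalf : Real.sqrt (45 / 180) = 1/2 := by
    rw [show (45:ℝ)/180 = (1/2)^2 by norm_num, Real.sqrt_sq (by norm_num)]
  have hF0 : F 0 = 1/3 := by
    simp only [hFdef, hU0, hg0]
    rw [show (180:ℝ)*(1-0) = 180 by norm_num, hhalf,
      show (4:ℝ)*Real.sqrt 5 * Real.sqrt 45 = 4 * (Real.sqrt 5 * Real.sqrt 45) by ring, s5]
    norm_num
  have hFten : Tendsto F (nhds 0) (nhds (1/3)) := by
    rw [← hF0]
    apply ContinuousAt.tendsto
    apply ContinuousAt.div
    · fun_prop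
    · apply ContinuousAt.mul
      · fun_prop
      · apply ContinuousAt.add
        · apply Real.continuous_sqrt.continuousAt.comp
          apply ContinuousAt.div
          · exact hU_cont.continuousAt
          · fun_prop
          · norm_num
        · fun_prop
    · rw [hU0, show (180:ℝ)*(1-0) = 180 by norm_num, hhalf]
      norm_num
  have hev : ∀ᶠ α in nhdsWithin 0 (Set.Ioi 0), b α / α = F α ∧ b α = α * F α := by
    have h1 : ∀ᶠ α in nhdsWithin 0 (Set.Ioi 0), α ∈ Set.Ioo (0:ℝ) 1 :=
      Ioo_mem_nhdsGT_of_mem (by norm_num)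
    have h2 : ∀ᶠ α in nhdsWithin 0 (Set.Ioi 0), 0 < U α := by
      have hUt : Tendsto U (nhds 0) (nhds 45) := hU0 ▸ hU_cont.continuousAt
      exact (hUt.eventually (eventually_gt_nhds (by norm_num))).filter_mono nhdsWithin_le_nhds
    filter_upwards [h1, h2] with α hα hUα
    obtain ⟨hα0, hα1⟩ := hα
    have hvα : (0:ℝ) < 180*(1-α) := by nlinarith
    have hs : 0 < U α / (180*(1-α)) := div_pos hUα hvα
    set X : ℝ := Real.sqrt (U α / (180*(1-α))) with hX
    have hX0 : 0 ≤ X := Real.sqrt_nonneg _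
    have hsum : 0 < X + (1-α)/2 := by
      have : (0:ℝ) < (1-α)/2 := by linarith
      linarith
    have hDpos : 0 < 180*(1-α) * (X + (1-α)/2) := mul_pos hvα hsum
    have hXX : 180*(1-α) * (X * X) = U α := by
      rw [hX, Real.mul_self_sqrt hs.le]
      field_simp
    have hUeq : U α = 45 - 15*α + 15*α^2 - 45*α^3 + 20*α^4 - 4*Real.sqrt 5 * (α * g α) := by
      rw [hUdef]
    have hbα : b α = X - (1-α)/2 := by rw [hb, hv, huU α hα0.le, hX]
    have hbF : b α = α * F α := by
      rw [hbα, hFdef]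
      simp only
      rw [← hX, mul_div_assoc', eq_div_iff hDpos.ne']
      linear_combination hXX + hUeq
    refine ⟨?_, hbF⟩
    rw [hbF, mul_comm, mul_div_assoc, div_self hα0.ne', mul_one]
  constructor
  · have h0 : Tendsto (fun α : ℝ => α * F α) (nhdsWithin 0 (Set.Ioi 0)) (nhds (0 * (1/3))) :=
      Tendsto.mul (tendsto_id.mono_left nhdsWithin_le_nhds)
        (hFten.mono_left nhdsWithin_le_nhds)
    rw [show (0:ℝ) * (1/3) = 0 by norm_num] at h0
    exact h0.congr' (by filter_upwards [hev] with α h using h.2.symm)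
  · exact (hFten.mono_left nhdsWithin_le_nhds).congr'
      (by filter_upwards [hev] with α h using h.1.symm)
end

section
/- For linear regression with a symmetric covariate distribution (density f_X with f_X(−x) = f_X(x) and finite positive second moment), and for α ∈ (0,1), the design with density f_X(x)𝟙_{|x| ≥ a}(x), where a is the (1 − α/2)-quantile of the covariate distribution, satisfies the equivalence-theorem optimality conditions: its sensitivity function ψ(x) is an even quadratic in x that is ≥ its value at a exactly on {|x| ≥ a}. Hence this design is D-optimal among all measures of mass α with density bounded by f_X. -/
open MeasureTheory Set

/-- Linear regression with a symmetric covariate density `f_X`: the two-tail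
design with density `f_X(x)𝟙_{|x| ≥ a}`, where `a` is the `(1 − α/2)`-quantile
(so the tails carry mass `α`), has sensitivity function
`ψ(x) = 1 + αx²/m₂`, an even quadratic that is `≥ ψ(a)` exactly on `{|x| ≥ a}`;
hence this design is `D`-optimal among all measures of mass `α` with density
bounded by `f_X`. -/
theorem stmt16 (fX : ℝ → ℝ) (hfmeas : Measurable fX) (hfpos : ∀ x, 0 ≤ fX x)
    (hsymm : ∀ x, fX (-x) = fX x) (hfprob : (∫ x : ℝ, fX x) = 1)
    (hmom : MeasureTheory.Integrable (fun x : ℝ => x ^ 2 * fX x))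
    (α : ℝ) (hα : α ∈ Set.Ioo (0 : ℝ) 1) (a : ℝ) (ha : 0 ≤ a)
    (hquant : (∫ x in {x : ℝ | a ≤ |x|}, fX x) = α)
    (m₂ : ℝ) (hm₂ : m₂ = ∫ x in {x : ℝ | a ≤ |x|}, x ^ 2 * fX x) (hm₂pos : 0 < m₂) :
    (∀ x : ℝ, a ≤ |x| ↔ 1 + α * a ^ 2 / m₂ ≤ 1 + α * x ^ 2 / m₂) ∧
    ∀ g : ℝ → ℝ, Measurable g → (∀ x, 0 ≤ g x) → (∀ x, g x ≤ fX x) →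
      (∫ x : ℝ, g x) = α →
      α * (∫ x : ℝ, x ^ 2 * g x) - (∫ x : ℝ, x * g x) ^ 2 ≤ α * m₂ := by
  obtain ⟨hα0, hα1⟩ := hα
  have hfX_int : Integrable fX := by
    by_contra h
    rw [integral_undef h] at hfprob
    norm_num at hfprob
  constructor
  · intro x
    constructor
    · intro h
      have h2 : a ^ 2 ≤ x ^ 2 := by nlinarith [abs_nonneg x, sq_abs x]
      have h3 : α * a ^ 2 / m₂ ≤ α * x ^ 2 / m₂ :=
        (div_le_div_iff_of_pos_right hm₂pos).mpr (mul_le_mul_of_nonneg_left h2 hα0.le)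
      linarith
    · intro h
      have h' : α * a ^ 2 / m₂ ≤ α * x ^ 2 / m₂ := by linarith
      have h2 : α * a ^ 2 ≤ α * x ^ 2 := by
        rwa [div_le_div_iff_of_pos_right hm₂pos] at h'
      have h3 : a ^ 2 ≤ x ^ 2 := le_of_mul_le_mul_left h2 hα0
      nlinarith [abs_nonneg x, sq_abs x]
  · intro g hgmeas hgpos hgle hgmass
    set T : Set ℝ := {x : ℝ | a ≤ |x|} with hT
    have hTmeas : MeasurableSet T :=
      (isClosed_le continuous_const continuous_abs).measurableSet
    have hg_int : Integrable g := by
      refine hfX_int.mono hgmeas.aestronglyMeasurable (ae_of_all _ fun x => ?_)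
      simp only [Real.norm_eq_abs, abs_of_nonneg (hgpos x), abs_of_nonneg (hfpos x)]
      exact hgle x
    have hx2g_int : Integrable (fun x : ℝ => x ^ 2 * g x) := by
      refine hmom.mono ((measurable_id.pow_const 2).mul hgmeas).aestronglyMeasurable (ae_of_all _ fun x => ?_)
      simp only [Real.norm_eq_abs]
      rw [abs_of_nonneg (mul_nonneg (sq_nonneg x) (hgpos x)),
        abs_of_nonneg (mul_nonneg (sq_nonneg x) (hfpos x))]
      exact mul_le_mul_of_nonneg_left (hgle x) (sq_nonneg x)
    have hxg_int : Integrable (fun x : ℝ => x * g x) := by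
      refine (hg_int.add hx2g_int).mono (measurable_id.mul hgmeas).aestronglyMeasurable
        (ae_of_all _ fun x => ?_)
      simp only [Pi.add_apply, Real.norm_eq_abs, abs_mul]
      rw [abs_of_nonneg (hgpos x)]
      have h1 : |x| ≤ 1 + x ^ 2 := by nlinarith [abs_nonneg x, sq_abs x, sq_nonneg (|x| - 1)]
      have h2 : g x + x ^ 2 * g x ≤ |g x + x ^ 2 * g x| := le_abs_self _
      nlinarith [hgpos x, abs_nonneg x, sq_abs x, sq_nonneg (|x| - 1)]
    -- key claim : ∫ x² g ≤ m₂
    have hsplit_g : (∫ x in T, g x) + (∫ x in Tᶜ, g x) = α := by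
      rw [integral_add_compl hTmeas hg_int, hgmass]
    have hsplit_x2g : (∫ x in T, x ^ 2 * g x) + (∫ x in Tᶜ, x ^ 2 * g x)
        = ∫ x : ℝ, x ^ 2 * g x := integral_add_compl hTmeas hx2g_int
    -- On T: x² g + a² fX ≤ x² fX + a² g
    have hclaimA : (∫ x in T, (x ^ 2 * g x + a ^ 2 * fX x))
        ≤ ∫ x in T, (x ^ 2 * fX x + a ^ 2 * g x) := by
      refine setIntegral_mono_on
        (hx2g_int.integrableOn.add (hfX_int.const_mul _).integrableOn)
        (hmom.integrableOn.add (hg_int.const_mul _).integrableOn)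
        hTmeas (fun x hx => ?_)
      have hx' : a ^ 2 ≤ x ^ 2 := by
        have : a ≤ |x| := hx
        nlinarith [abs_nonneg x, sq_abs x]
      nlinarith [hgle x, hgpos x, hfpos x]
    have hclaimB : (∫ x in Tᶜ, x ^ 2 * g x) ≤ ∫ x in Tᶜ, a ^ 2 * g x := by
      refine setIntegral_mono_on hx2g_int.integrableOn (hg_int.const_mul _).integrableOn
        hTmeas.compl (fun x hx => ?_)
      have hx' : |x| < a := by
        have hx'' : ¬ a ≤ |x| := by simpa [T, mem_compl_iff, mem_setOf_eq] using hx
        exact not_le.mp hx''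
      have hx2 : x ^ 2 ≤ a ^ 2 := by nlinarith [abs_nonneg x, sq_abs x]
      exact mul_le_mul_of_nonneg_right hx2 (hgpos x)
    have hTa : (∫ x in T, (x ^ 2 * g x + a ^ 2 * fX x))
        = (∫ x in T, x ^ 2 * g x) + a ^ 2 * (∫ x in T, fX x) := by
      rw [integral_add hx2g_int.integrableOn ((hfX_int.const_mul _).integrableOn),
        integral_const_mul]
    have hTb : (∫ x in T, (x ^ 2 * fX x + a ^ 2 * g x))
        = (∫ x in T, x ^ 2 * fX x) + a ^ 2 * (∫ x in T, g x) := by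
      rw [integral_add hmom.integrableOn ((hg_int.const_mul _).integrableOn),
        integral_const_mul]
    have hTc : (∫ x in Tᶜ, a ^ 2 * g x) = a ^ 2 * (∫ x in Tᶜ, g x) := integral_const_mul _ _
    have hkey : (∫ x : ℝ, x ^ 2 * g x) ≤ m₂ := by
      have hqa : (∫ x in T, fX x) = α := hquant
      rw [hTa, hTb, hqa] at hclaimA
      rw [hTc] at hclaimB
      rw [hm₂]
      have hmul : a ^ 2 * (∫ x in T, g x) + a ^ 2 * (∫ x in Tᶜ, g x) = a ^ 2 * α := by
        rw [← mul_add, hsplit_g]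
      linarith [hsplit_g, hsplit_x2g, hclaimA, hclaimB]
    nlinarith [sq_nonneg (∫ x : ℝ, x * g x)]
end

section
/- In linear regression with a symmetric covariate distribution with density f_X, E(X²) = c² < ∞, the D-efficiency of uniform random subsampling is bounded above: eff_{D,α}(ξ_α) ≤ c / q_{1−α/2}, where q_{1−α/2} is the (1−α/2)-quantile of the covariate distribution. In particular, if the distribution is unbounded (quantiles tend to infinity), the efficiency tends to 0 as α → 0. -/
open MeasureTheory Set Filter Topology Real

/-- Linear regression with a symmetric covariate density `f_X` with
`E(X²) = c²`: the `D`-efficiency of uniform random subsampling is bounded by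
`c / q_{1−α/2}` (the optimal design takes the two tails beyond the
`(1 − α/2)`-quantile `Qa`, with `det M(ξ_α) = α²c²` and
`det M(ξ*_α) = α m₂(ξ*_α)`); in particular, if the quantiles tend to infinity
as `α → 0⁺`, the efficiency tends to `0`. -/
theorem stmt18 (fX : ℝ → ℝ) (hfmeas : Measurable fX) (hfpos : ∀ x, 0 ≤ fX x)
    (hsymm : ∀ x, fX (-x) = fX x) (hfprob : (∫ x : ℝ, fX x) = 1)
    (hmom : MeasureTheory.Integrable (fun x : ℝ => x ^ 2 * fX x))
    (c : ℝ) (hc : 0 < c) (hc2 : c ^ 2 = ∫ x : ℝ, x ^ 2 * fX x) :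
    (∀ α : ℝ, α ∈ Set.Ioo (0 : ℝ) 1 → ∀ Qa : ℝ, 0 < Qa →
      (∫ x in {x : ℝ | Qa ≤ |x|}, fX x) = α →
      Real.sqrt ((α ^ 2 * c ^ 2) / (α * ∫ x in {x : ℝ | Qa ≤ |x|}, x ^ 2 * fX x)) ≤ c / Qa) ∧
    ∀ Q : ℝ → ℝ, (∀ α ∈ Set.Ioo (0 : ℝ) 1, 0 < Q α ∧ (∫ x in {x : ℝ | Q α ≤ |x|}, fX x) = α) →
      Filter.Tendsto Q (nhdsWithin 0 (Set.Ioi 0)) Filter.atTop →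
      Filter.Tendsto
        (fun α => Real.sqrt
          ((α ^ 2 * c ^ 2) / (α * ∫ x in {x : ℝ | Q α ≤ |x|}, x ^ 2 * fX x)))
        (nhdsWithin 0 (Set.Ioi 0)) (nhds 0) := by
  have main : ∀ α : ℝ, α ∈ Set.Ioo (0 : ℝ) 1 → ∀ Qa : ℝ, 0 < Qa →
      (∫ x in {x : ℝ | Qa ≤ |x|}, fX x) = α →
      Real.sqrt ((α ^ 2 * c ^ 2) / (α * ∫ x in {x : ℝ | Qa ≤ |x|}, x ^ 2 * fX x)) ≤ c / Qa := by
    intro α hα Qa hQa hαdef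
    obtain ⟨hα0, hα1⟩ := hα
    set S : Set ℝ := {x : ℝ | Qa ≤ |x|} with hSdef
    have hS : MeasurableSet S := measurableSet_le measurable_const measurable_abs
    have hint2 : IntegrableOn (fun x : ℝ => x ^ 2 * fX x) S := hmom.integrableOn
    have hintf : IntegrableOn fX S := by
      refine Integrable.mono (hint2.const_mul (1 / Qa ^ 2))
        (hfmeas.aestronglyMeasurable.restrict) ?_
      filter_upwards [ae_restrict_mem hS] with x hx
      have hx2 : Qa ^ 2 ≤ x ^ 2 := by
        have := sq_abs x ▸ pow_le_pow_left₀ hQa.le hx 2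
        linarith [sq_abs x, pow_le_pow_left₀ hQa.le (hx : Qa ≤ |x|) 2]
      have h1 : fX x ≤ 1 / Qa ^ 2 * (x ^ 2 * fX x) := by
        have h2 : Qa ^ 2 * fX x ≤ x ^ 2 * fX x := mul_le_mul_of_nonneg_right hx2 (hfpos x)
        calc fX x = 1 / Qa ^ 2 * (Qa ^ 2 * fX x) := by field_simp
          _ ≤ 1 / Qa ^ 2 * (x ^ 2 * fX x) := mul_le_mul_of_nonneg_left h2 (by positivity)
      rw [Real.norm_eq_abs, Real.norm_eq_abs, abs_of_nonneg (hfpos x)]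
      exact h1.trans (le_abs_self _)
    have hkey : Qa ^ 2 * α ≤ ∫ x in S, x ^ 2 * fX x := by
      calc Qa ^ 2 * α = ∫ x in S, Qa ^ 2 * fX x := by
            rw [integral_const_mul, hαdef]
        _ ≤ ∫ x in S, x ^ 2 * fX x := by
            refine setIntegral_mono_on (hintf.const_mul _) hint2 hS ?_
            intro x hx
            have hx2 : Qa ^ 2 ≤ x ^ 2 := by
              have h := pow_le_pow_left₀ hQa.le (hx : Qa ≤ |x|) 2
              rwa [sq_abs] at h
            exact mul_le_mul_of_nonneg_right hx2 (hfpos x)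
    have hm : 0 < ∫ x in S, x ^ 2 * fX x := lt_of_lt_of_le (by positivity) hkey
    have hdiv : (α ^ 2 * c ^ 2) / (α * ∫ x in S, x ^ 2 * fX x) ≤ c ^ 2 / Qa ^ 2 := by
      rw [div_le_div_iff₀ (by positivity) (by positivity)]
      have : α ^ 2 * c ^ 2 * Qa ^ 2 = c ^ 2 * (α * (Qa ^ 2 * α)) := by ring
      rw [this]
      have : c ^ 2 * (α * ∫ x in S, x ^ 2 * fX x) = c ^ 2 * α * (∫ x in S, x ^ 2 * fX x) := by ring
      rw [this]
      calc c ^ 2 * (α * (Qa ^ 2 * α)) = c ^ 2 * α * (Qa ^ 2 * α) := by ring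
        _ ≤ c ^ 2 * α * (∫ x in S, x ^ 2 * fX x) :=
            mul_le_mul_of_nonneg_left hkey (by positivity)
    calc Real.sqrt ((α ^ 2 * c ^ 2) / (α * ∫ x in S, x ^ 2 * fX x))
        ≤ Real.sqrt (c ^ 2 / Qa ^ 2) := Real.sqrt_le_sqrt hdiv
      _ = c / Qa := by
          rw [← div_pow, Real.sqrt_sq (by positivity)]
  refine ⟨main, ?_⟩
  intro Q hQ hQtop
  have hmem : Set.Ioo (0 : ℝ) 1 ∈ nhdsWithin (0 : ℝ) (Set.Ioi 0) :=
    Ioo_mem_nhdsGT_of_mem (by constructor <;> norm_num)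
  have hg : Tendsto (fun α => c / Q α) (nhdsWithin 0 (Set.Ioi 0)) (nhds 0) :=
    Tendsto.div_atTop tendsto_const_nhds hQtop
  have hub : ∀ᶠ α in nhdsWithin (0:ℝ) (Set.Ioi 0),
      Real.sqrt ((α ^ 2 * c ^ 2) / (α * ∫ x in {x : ℝ | Q α ≤ |x|}, x ^ 2 * fX x)) ≤ c / Q α := by
    filter_upwards [hmem] with α hα
    obtain ⟨hQpos, hQeq⟩ := hQ α hα
    exact main α hα (Q α) hQpos hQeq
  exact squeeze_zero' (Eventually.of_forall fun α => Real.sqrt_nonneg _) hub hg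
end
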